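/- Let α, β, γ, δ be closed smooth 1-forms on M. Then 4(∇_{α♯}∇_{β♯}γ)(δ♯) = −g⁻¹( d(γ(β♯)), d(δ(α♯)) ) + g( [δ♯,α♯], [β♯,γ♯] ) + 2 α♯β♯(γ(δ♯)) − 2 α♯γ♯(δ(β♯)) + α♯δ♯(β(γ♯)) − [β♯,γ♯](δ(α♯)) + δ♯α♯(β(γ♯)), where expressions such as α♯β♯(f) denote iterated directional derivatives of the function f. -/

import Mathlib

/-!
Local-coordinate (chart) model of a Riemannian manifold: points are elements
of `ℝⁿ`, vector fields and 1-forms are given by their component functions on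
an open set `U`, and the metric by its matrix of components.
-/

noncomputable section

namespace RG

/-- Points of the chart. -/
abbrev Pt (n : ℕ) : Type := Fin n → ℝ
/-- Vector fields, by components. -/
abbrev VF (n : ℕ) : Type := Pt n → Fin n → ℝ
/-- 1-forms, by components. -/
abbrev OneForm (n : ℕ) : Type := Pt n → Fin n → ℝ
/-- Metric tensors, by components. -/
abbrev Met (n : ℕ) : Type := Pt n → Matrix (Fin n) (Fin n) ℝ

variable {n : ℕ}

/-- Partial derivative `∂ₛ f`. -/
def pd (s : Fin n) (f : Pt n → ℝ) : Pt n → ℝ := fun x => fderiv ℝ f x (Pi.single s 1)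

/-- Directional derivative `X f` of a function along a vector field. -/
def dder (X : VF n) (f : Pt n → ℝ) : Pt n → ℝ := fun x => fderiv ℝ f x (X x)

/-- Lie bracket `[X, Y]` of vector fields. -/
def bracket (X Y : VF n) : VF n :=
  fun x k => fderiv ℝ (fun y => Y y k) x (X x) - fderiv ℝ (fun y => X y k) x (Y x)

/-- The inverse (co-)metric `g⁻¹`. -/
def ginv (g : Met n) : Met n := fun x => (g x)⁻¹

/-- Pairing `α(X)` of a 1-form with a vector field. -/
def pairF (α : OneForm n) (X : VF n) : Pt n → ℝ := fun x => ∑ i, α x i * X x i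

/-- Metric inner product `g(X,Y)` of vector fields. -/
def gV (g : Met n) (X Y : VF n) : Pt n → ℝ := fun x => ∑ i, ∑ j, g x i j * X x i * Y x j

/-- Co-metric inner product `g⁻¹(α,β)` of 1-forms. -/
def gF (g : Met n) (α β : OneForm n) : Pt n → ℝ :=
  fun x => ∑ i, ∑ j, ginv g x i j * α x i * β x j

/-- Raising indices: `α♯ = g⁻¹ α`. -/
def sharp (g : Met n) (α : OneForm n) : VF n := fun x k => ∑ i, ginv g x i k * α x i

/-- Lowering indices: `X♭ = g X`. -/
def flat (g : Met n) (X : VF n) : OneForm n := fun x k => ∑ i, g x i k * X x i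

/-- Differential `df` of a function, as a 1-form. -/
def dF (f : Pt n → ℝ) : OneForm n := fun x i => pd i f x

/-- Exterior derivative of a 1-form, evaluated on two vector fields:
`dα(X,Y) = Σ (∂ᵢα_j − ∂_jαᵢ) Xⁱ Y^j`. -/
def dOne (α : OneForm n) (X Y : VF n) : Pt n → ℝ :=
  fun x => ∑ i, ∑ j, (pd i (fun y => α y j) x - pd j (fun y => α y i) x) * X x i * Y x j

/-- Christoffel symbols `Γ^k_{ij}` of the Levi-Civita connection. -/
def chr (g : Met n) (k i j : Fin n) : Pt n → ℝ :=
  fun x => (1/2) * ∑ l, ginv g x k l *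
    (pd i (fun y => g y j l) x + pd j (fun y => g y i l) x - pd l (fun y => g y i j) x)

/-- Levi-Civita covariant derivative `∇_X Y` of a vector field. -/
def covV (g : Met n) (X Y : VF n) : VF n :=
  fun x k => fderiv ℝ (fun y => Y y k) x (X x) + ∑ i, ∑ j, chr g k i j x * X x i * Y x j

/-- Levi-Civita covariant derivative `∇_X α` of a 1-form, characterized by
`(∇_X α)(Y) = X(α(Y)) − α(∇_X Y)`. -/
def covF (g : Met n) (X : VF n) (α : OneForm n) : OneForm n :=
  fun x j => fderiv ℝ (fun y => α y j) x (X x) - ∑ i, ∑ k, X x i * chr g k i j x * α x k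

/-- Riemann curvature tensor `R(X,Y)Z = ∇_X∇_Y Z − ∇_Y∇_X Z − ∇_{[X,Y]}Z`. -/
def Rcurv (g : Met n) (X Y Z : VF n) : VF n :=
  covV g X (covV g Y Z) - covV g Y (covV g X Z) - covV g (bracket X Y) Z

/-- Lie derivative of a 1-form along a vector field. -/
def lieF (X : VF n) (α : OneForm n) : OneForm n :=
  fun x i => fderiv ℝ (fun y => α y i) x (X x) + ∑ s, α x s * pd i (fun y => X y s) x

/-- Lie derivative of a contravariant 2-tensor (such as the co-metric `g⁻¹`). -/
def lieCo (X : VF n) (G : Met n) : Met n :=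
  fun x => Matrix.of fun i j =>
    fderiv ℝ (fun y => G y i j) x (X x)
      - ∑ s, G x s j * pd s (fun y => X y i) x
      - ∑ s, G x i s * pd s (fun y => X y j) x

/-- Evaluation of a contravariant 2-tensor on a pair of 1-forms. -/
def evCo (G : Met n) (α β : OneForm n) : Pt n → ℝ :=
  fun x => ∑ i, ∑ j, G x i j * α x i * β x j

/-- Smoothness of (the components of) a 1-form or vector field on `U`. -/
def SmoothSec (U : Set (Pt n)) (ω : Pt n → Fin n → ℝ) : Prop :=
  ∀ i, ContDiffOn ℝ (⊤ : ℕ∞) (fun y => ω y i) U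

/-- Smoothness of the metric components on `U`. -/
def SmoothMet (U : Set (Pt n)) (g : Met n) : Prop :=
  ∀ i j, ContDiffOn ℝ (⊤ : ℕ∞) (fun y => g y i j) U

/-- `g` is a smooth Riemannian metric on `U`. -/
def IsRiemannOn (U : Set (Pt n)) (g : Met n) : Prop :=
  SmoothMet U g ∧ ∀ x ∈ U, (g x).IsSymm ∧ (g x).PosDef

/-- A 1-form is closed on `U`. -/
def IsClosedOn (U : Set (Pt n)) (α : OneForm n) : Prop :=
  ∀ x ∈ U, ∀ i j, pd i (fun y => α y j) x = pd j (fun y => α y i) x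

end RG

open RG

namespace RGAux

variable {n : ℕ} {U : Set (Pt n)}

/-- Abbreviation for smooth scalar functions on `U`. -/
def SmOn (U : Set (Pt n)) (f : Pt n → ℝ) : Prop := ContDiffOn ℝ (⊤ : ℕ∞) f U

lemma SmOn.diffAt {f : Pt n → ℝ} (hU : IsOpen U) (hf : SmOn U f) {x : Pt n} (hx : x ∈ U) :
    DifferentiableAt ℝ f x :=
  (hf.contDiffAt (hU.mem_nhds hx)).differentiableAt (by simp)

lemma SmOn.pd {f : Pt n → ℝ} (hU : IsOpen U) (hf : SmOn U f) (s : Fin n) :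
    SmOn U (RG.pd s f) :=
  (hf.fderiv_of_isOpen hU (by simp)).clm_apply contDiffOn_const

lemma SmOn.const : SmOn U (fun _ => (c : ℝ)) := contDiffOn_const
lemma SmOn.add {f g : Pt n → ℝ} (hf : SmOn U f) (hg : SmOn U g) : SmOn U (fun x => f x + g x) := ContDiffOn.add hf hg
lemma SmOn.sub {f g : Pt n → ℝ} (hf : SmOn U f) (hg : SmOn U g) : SmOn U (fun x => f x - g x) := ContDiffOn.sub hf hg
lemma SmOn.mul {f g : Pt n → ℝ} (hf : SmOn U f) (hg : SmOn U g) : SmOn U (fun x => f x * g x) := ContDiffOn.mul hf hg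
lemma SmOn.sum {ι : Type*} {s : Finset ι} {f : ι → Pt n → ℝ} (hf : ∀ i ∈ s, SmOn U (f i)) :
    SmOn U (fun x => ∑ i ∈ s, f i x) := ContDiffOn.sum hf

/-- directional derivative along a vector field is smooth. -/
lemma SmOn.dder {f : Pt n → ℝ} {X : VF n} (hU : IsOpen U) (hf : SmOn U f)
    (hX : ∀ k, SmOn U (fun x => X x k)) : SmOn U (dder X f) :=
  (hf.fderiv_of_isOpen hU (by simp)).clm_apply (contDiffOn_pi.2 hX)

/-- Decomposition of a directional derivative into partial derivatives. -/
lemma fderiv_eq_sum_pd {f : Pt n → ℝ} {x : Pt n} (hf : DifferentiableAt ℝ f x) (v : Fin n → ℝ) :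
    fderiv ℝ f x v = ∑ s, v s * RG.pd s f x := by
  have hv : v = ∑ s, (v s) • (Pi.single s (1:ℝ) : Pt n) := by
    have : ∀ s : Fin n, (v s) • (Pi.single s (1:ℝ) : Pt n) = Pi.single s (v s) := by
      intro s; rw [← Pi.single_smul]; norm_num
    simp only [this, Finset.univ_sum_single]
  conv_lhs => rw [hv]
  rw [map_sum]
  simp [RG.pd, smul_eq_mul]

/-- Product rule, evaluated form. -/
lemma D_mul {f g : Pt n → ℝ} {x : Pt n} (hf : DifferentiableAt ℝ f x)
    (hg : DifferentiableAt ℝ g x) (v : Fin n → ℝ) :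
    fderiv ℝ (fun y => f y * g y) x v = fderiv ℝ f x v * g x + f x * fderiv ℝ g x v := by
  rw [fderiv_fun_mul hf hg]; simp [smul_eq_mul]; ring

lemma D_sum {ι : Type*} {s : Finset ι} {f : ι → Pt n → ℝ} {x : Pt n}
    (hf : ∀ i ∈ s, DifferentiableAt ℝ (f i) x) (v : Fin n → ℝ) :
    fderiv ℝ (fun y => ∑ i ∈ s, f i y) x v = ∑ i ∈ s, fderiv ℝ (f i) x v := by
  rw [fderiv_fun_sum hf]; simp

lemma D_add {f g : Pt n → ℝ} {x : Pt n} (hf : DifferentiableAt ℝ f x)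
    (hg : DifferentiableAt ℝ g x) (v : Fin n → ℝ) :
    fderiv ℝ (fun y => f y + g y) x v = fderiv ℝ f x v + fderiv ℝ g x v := by
  rw [fderiv_fun_add hf hg]; simp

lemma D_sub {f g : Pt n → ℝ} {x : Pt n} (hf : DifferentiableAt ℝ f x)
    (hg : DifferentiableAt ℝ g x) (v : Fin n → ℝ) :
    fderiv ℝ (fun y => f y - g y) x v = fderiv ℝ f x v - fderiv ℝ g x v := by
  rw [fderiv_fun_sub hf hg]; simp

lemma D_const_mul {f : Pt n → ℝ} {x : Pt n} (hf : DifferentiableAt ℝ f x) (c : ℝ) (v : Fin n → ℝ) :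
    fderiv ℝ (fun y => c * f y) x v = c * fderiv ℝ f x v := by
  rw [fderiv_const_mul hf]; simp

/-- fderiv congruence from agreement on an open set. -/
lemma D_congr {f g : Pt n → ℝ} {x : Pt n} (hU : IsOpen U) (hx : x ∈ U)
    (h : ∀ y ∈ U, f y = g y) : fderiv ℝ f x = fderiv ℝ g x :=
  Filter.EventuallyEq.fderiv_eq (Filter.eventuallyEq_of_mem (hU.mem_nhds hx) h)

/-- Clairaut / symmetry of second partial derivatives. -/
lemma pd_comm {f : Pt n → ℝ} (hU : IsOpen U) (hf : SmOn U f) {x : Pt n} (hx : x ∈ U)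
    (i j : Fin n) : RG.pd i (RG.pd j f) x = RG.pd j (RG.pd i f) x := by
  have hev : ∀ᶠ y in nhds x, HasFDerivAt f (fderiv ℝ f y) y := by
    filter_upwards [hU.mem_nhds hx] with y hy using (hf.diffAt hU hy).hasFDerivAt
  have hd' : DifferentiableAt ℝ (fderiv ℝ f) x :=
    (((hf.fderiv_of_isOpen (m := (⊤ : ℕ∞)) hU (by simp)).contDiffAt (hU.mem_nhds hx)).differentiableAt (by simp))
  have hsym := second_derivative_symmetric_of_eventually hev hd'.hasFDerivAt
  have key : ∀ a b : Fin n, RG.pd a (RG.pd b f) x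
      = fderiv ℝ (fderiv ℝ f) x (Pi.single a 1) (Pi.single b 1) := by
    intro a b
    have : RG.pd b f = fun y => (fderiv ℝ f y) ((fun _ : Pt n => (Pi.single b 1 : Pt n)) y) := rfl
    rw [RG.pd, this, fderiv_clm_apply hd' (differentiableAt_const _)]
    simp
  rw [key i j, key j i, hsym]

/-- Smoothness of a finite product. -/
lemma SmOn.prod {ι : Type*} {s : Finset ι} {f : ι → Pt n → ℝ} (hf : ∀ i ∈ s, SmOn U (f i)) :
    SmOn U (fun x => ∏ i ∈ s, f i x) := by
  classical
  induction s using Finset.induction with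
  | empty => simpa using (SmOn.const (c := 1))
  | @insert a s ha ih =>
    simp only [Finset.prod_insert ha]
    exact (hf a (Finset.mem_insert_self a s)).mul
      (ih fun i hi => hf i (Finset.mem_insert_of_mem hi))

/-- Smoothness of the determinant of a smooth matrix function. -/
lemma smOn_det {M : Pt n → Matrix (Fin n) (Fin n) ℝ}
    (hM : ∀ i j, SmOn U (fun x => M x i j)) : SmOn U (fun x => (M x).det) := by
  have : (fun x => (M x).det)
      = fun x => ∑ σ : Equiv.Perm (Fin n), (Equiv.Perm.sign σ : ℝ) * ∏ i, M x (σ i) i := by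
    funext x; rw [Matrix.det_apply]
    refine Finset.sum_congr rfl fun σ _ => ?_
    simp [Units.smul_def, zsmul_eq_mul]
  rw [this]
  exact SmOn.sum fun σ _ => (SmOn.const (c := ((Equiv.Perm.sign σ : ℤ) : ℝ))).mul
    (SmOn.prod fun i _ => hM (σ i) i)

variable {g : Met n}

lemma det_ne (hg : IsRiemannOn U g) {x : Pt n} (hx : x ∈ U) : (g x).det ≠ 0 :=
  ((hg.2 x hx).2.det_pos).ne'

/-- Smoothness of the entries of the inverse metric. -/
lemma sm_ginv (hU : IsOpen U) (hg : IsRiemannOn U g) (i j : Fin n) :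
    SmOn U (fun x => ginv g x i j) := by
  have hadj : SmOn U (fun x => (g x).adjugate i j) := by
    have : (fun x => (g x).adjugate i j)
        = fun x => ((g x).updateRow j (Pi.single i 1)).det := by
      funext x; rw [Matrix.adjugate_apply]
    rw [this]
    refine smOn_det fun a b => ?_
    by_cases hab : a = j
    · simp only [Matrix.updateRow_apply, hab, if_pos rfl]; exact SmOn.const
    · simp only [Matrix.updateRow_apply, if_neg hab]; exact hg.1 a b
  have hdet : SmOn U (fun x => ((g x).det)⁻¹) :=
    (smOn_det fun a b => hg.1 a b).inv fun x hx => det_ne hg hx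
  refine ContDiffOn.congr (hdet.mul hadj) fun x hx => ?_
  rw [ginv, Matrix.inv_def, Matrix.smul_apply, Ring.inverse_eq_inv', smul_eq_mul]

/-- `g⁻¹ g = 1` entrywise. -/
lemma ginv_mul_g (hg : IsRiemannOn U g) {x : Pt n} (hx : x ∈ U) (i j : Fin n) :
    ∑ k, ginv g x i k * g x k j = if i = j then 1 else 0 := by
  have h := Matrix.nonsing_inv_mul (g x) (isUnit_iff_ne_zero.mpr (det_ne hg hx))
  have := congrFun (congrFun h i) j
  rw [Matrix.mul_apply] at this
  rw [show (ginv g x : Matrix (Fin n) (Fin n) ℝ) = (g x)⁻¹ from rfl]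
  rw [this]; simp [Matrix.one_apply]

/-- `g g⁻¹ = 1` entrywise. -/
lemma g_mul_ginv (hg : IsRiemannOn U g) {x : Pt n} (hx : x ∈ U) (i j : Fin n) :
    ∑ k, g x i k * ginv g x k j = if i = j then 1 else 0 := by
  have h := Matrix.mul_nonsing_inv (g x) (isUnit_iff_ne_zero.mpr (det_ne hg hx))
  have := congrFun (congrFun h i) j
  rw [Matrix.mul_apply] at this
  rw [show (ginv g x : Matrix (Fin n) (Fin n) ℝ) = (g x)⁻¹ from rfl]
  rw [this]; simp [Matrix.one_apply]

lemma g_symm (hg : IsRiemannOn U g) {x : Pt n} (hx : x ∈ U) (i j : Fin n) :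
    g x i j = g x j i := by
  have := (hg.2 x hx).1
  rw [Matrix.IsSymm] at this
  conv_rhs => rw [← this]
  rfl

lemma ginv_symm (hg : IsRiemannOn U g) {x : Pt n} (hx : x ∈ U) (i j : Fin n) :
    ginv g x i j = ginv g x j i := by
  have hsymm := (hg.2 x hx).1
  rw [Matrix.IsSymm] at hsymm
  have h : Matrix.transpose ((g x)⁻¹) = (g x)⁻¹ := by
    rw [Matrix.transpose_nonsing_inv, hsymm]
  have := congrFun (congrFun h i) j
  rw [Matrix.transpose_apply] at this
  exact this.symm

/-- Partial derivatives of the metric are symmetric in the matrix indices. -/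
lemma pd_g_symm (hU : IsOpen U) (hg : IsRiemannOn U g) {x : Pt n} (hx : x ∈ U) (s i j : Fin n) :
    RG.pd s (fun y => g y i j) x = RG.pd s (fun y => g y j i) x := by
  rw [RG.pd, RG.pd, D_congr hU hx (fun y hy => g_symm hg hy i j)]

lemma sm_sharp (hU : IsOpen U) (hg : IsRiemannOn U g) {α : OneForm n} (hα : SmoothSec U α)
    (k : Fin n) : SmOn U (fun x => sharp g α x k) := by
  simp only [sharp]
  exact SmOn.sum fun i _ => (sm_ginv hU hg i k).mul (hα i)

lemma sm_pairF (hU : IsOpen U) {α : OneForm n} {X : VF n} (hα : SmoothSec U α)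
    (hX : ∀ k, SmOn U (fun x => X x k)) : SmOn U (pairF α X) := by
  exact SmOn.sum fun i _ => (hα i).mul (hX i)

lemma sm_flat (hg : IsRiemannOn U g) {X : VF n} (hX : ∀ k, SmOn U (fun x => X x k)) (k : Fin n) :
    SmOn U (fun x => flat g X x k) := by
  simp only [flat]
  exact SmOn.sum fun i _ => (hg.1 i k).mul (hX i)

lemma sm_bracket (hU : IsOpen U) {X Y : VF n} (hX : ∀ k, SmOn U (fun x => X x k))
    (hY : ∀ k, SmOn U (fun x => Y x k)) (k : Fin n) :
    SmOn U (fun x => bracket X Y x k) := by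
  exact SmOn.sub (SmOn.dder hU (hY k) hX) (SmOn.dder hU (hX k) hY)

lemma sm_chr (hU : IsOpen U) (hg : IsRiemannOn U g) (k i j : Fin n) : SmOn U (chr g k i j) := by
  refine SmOn.mul (SmOn.const (c := 1/2)) (SmOn.sum fun l _ => SmOn.mul (sm_ginv hU hg k l) ?_)
  exact SmOn.sub (SmOn.add (SmOn.pd hU (hg.1 j l) i) (SmOn.pd hU (hg.1 i l) j))
    (SmOn.pd hU (hg.1 i j) l)

lemma sm_covF (hU : IsOpen U) (hg : IsRiemannOn U g) {X : VF n} {α : OneForm n}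
    (hX : ∀ k, SmOn U (fun x => X x k)) (hα : SmoothSec U α) (j : Fin n) :
    SmOn U (fun x => covF g X α x j) := by
  simp only [covF]
  refine SmOn.sub (SmOn.dder hU (hα j) hX) (SmOn.sum fun i _ => SmOn.sum fun k _ => ?_)
  exact SmOn.mul (SmOn.mul (hX i) (sm_chr hU hg k i j)) (hα k)

lemma sm_dF (hU : IsOpen U) {f : Pt n → ℝ} (hf : SmOn U f) (k : Fin n) :
    SmOn U (fun x => dF f x k) := by
  simp only [dF]; exact SmOn.pd hU hf k

/-- Kronecker collapse helpers. -/
lemma sum_if_mul (t : Fin n → ℝ) (i : Fin n) :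
    (∑ m, (if m = i then (1:ℝ) else 0) * t m) = t i := by simp

lemma sum_mul_if (t : Fin n → ℝ) (i : Fin n) :
    (∑ m, t m * (if m = i then (1:ℝ) else 0)) = t i := by simp

/-- Contraction: `∑ i, g i k * ∑ s, g⁻¹ s i * t s = t k`. -/
lemma contract_g_ginv (hg : IsRiemannOn U g) {x : Pt n} (hx : x ∈ U) (t : Fin n → ℝ) (k : Fin n) :
    ∑ i, g x i k * ∑ s, ginv g x s i * t s = t k := by
  calc ∑ i, g x i k * ∑ s, ginv g x s i * t s
      = ∑ i, ∑ s, (ginv g x s i * g x i k) * t s := by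
        simp only [Finset.mul_sum]
        exact Finset.sum_congr rfl fun i _ => Finset.sum_congr rfl fun s _ => by ring
    _ = ∑ s, (∑ i, ginv g x s i * g x i k) * t s := by
        rw [Finset.sum_comm]
        simp only [Finset.sum_mul]
    _ = ∑ s, (if s = k then (1:ℝ) else 0) * t s :=
        Finset.sum_congr rfl fun s _ => by rw [ginv_mul_g hg hx]
    _ = t k := sum_if_mul _ _

/-- Contraction: `∑ k, g k j * ∑ l, g⁻¹ k l * t l = t j`. -/
lemma contract_g_ginv' (hg : IsRiemannOn U g) {x : Pt n} (hx : x ∈ U) (t : Fin n → ℝ) (j : Fin n) :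
    ∑ k, g x k j * ∑ l, ginv g x k l * t l = t j := by
  have : ∀ k, (∑ l, ginv g x k l * t l) = ∑ l, ginv g x l k * t l := fun k =>
    Finset.sum_congr rfl fun l _ => by rw [ginv_symm hg hx]
  simp only [this]
  exact contract_g_ginv hg hx t j

/-- P1: `flat (sharp α) = α` on `U`. -/
lemma flat_sharp (hg : IsRiemannOn U g) {x : Pt n} (hx : x ∈ U) (α : OneForm n) (k : Fin n) :
    flat g (sharp g α) x k = α x k := by
  simp only [flat, sharp]
  exact contract_g_ginv hg hx (fun s => α x s) k

/-- Triple sum reordering helper. -/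
lemma sum_swap_inner {f : Fin n → Fin n → Fin n → ℝ} :
    (∑ a, ∑ b, ∑ c, f a b c) = ∑ a, ∑ c, ∑ b, f a b c :=
  Finset.sum_congr rfl fun _ _ => Finset.sum_comm

/-- P2: differentiating `flat (sharp α) = α`. -/
lemma D_flat_sharp (hU : IsOpen U) (hg : IsRiemannOn U g) {x : Pt n} (hx : x ∈ U)
    {α : OneForm n} (hα : SmoothSec U α) (k : Fin n) (v : Fin n → ℝ) :
    ∑ i, (fderiv ℝ (fun y => g y i k) x v * sharp g α x i
      + g x i k * fderiv ℝ (fun y => sharp g α y i) x v)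
    = fderiv ℝ (fun y => α y k) x v := by
  have hdg : ∀ i j, DifferentiableAt ℝ (fun y => g y i j) x :=
    fun i j => SmOn.diffAt hU (hg.1 i j) hx
  have hsh : ∀ i, DifferentiableAt ℝ (fun y => sharp g α y i) x :=
    fun i => SmOn.diffAt hU (sm_sharp hU hg hα i) hx
  have h1 : fderiv ℝ (fun y => flat g (sharp g α) y k) x = fderiv ℝ (fun y => α y k) x :=
    D_congr hU hx (fun y hy => flat_sharp hg hy α k)
  rw [← h1]
  have h2 : (fun y => flat g (sharp g α) y k)
      = fun y => ∑ i, (fun i y => g y i k * sharp g α y i) i y := rfl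
  rw [h2, D_sum (fun i _ => (hdg i k).fun_mul (hsh i)) v]
  exact Finset.sum_congr rfl fun i _ => (D_mul (hdg i k) (hsh i) v).symm

/-- L3: lowered Christoffel symbols. -/
lemma g_chr (hg : IsRiemannOn U g) {x : Pt n} (hx : x ∈ U) (i l j : Fin n) :
    ∑ k, g x k j * chr g k i l x
    = (1/2) * (RG.pd i (fun y => g y l j) x + RG.pd l (fun y => g y i j) x
        - RG.pd j (fun y => g y i l) x) := by
  have h1 : ∀ k, g x k j * chr g k i l x
      = g x k j * ∑ m, ginv g x k m * ((1/2) *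
          (RG.pd i (fun y => g y l m) x + RG.pd l (fun y => g y i m) x
            - RG.pd m (fun y => g y i l) x)) := by
    intro k; simp only [chr, Finset.mul_sum]
    exact Finset.sum_congr rfl fun m _ => by ring
  simp only [h1]
  rw [contract_g_ginv' hg hx]

/-- Contraction of Christoffel symbols with a 1-form, via its sharp. -/
lemma chr_contract (hg : IsRiemannOn U g) {x : Pt n} (hx : x ∈ U)
    (α : OneForm n) (i j : Fin n) :
    ∑ k, chr g k i j x * α x k
    = (1/2) * ∑ m, sharp g α x m *
        (RG.pd i (fun y => g y j m) x + RG.pd j (fun y => g y i m) x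
          - RG.pd m (fun y => g y i j) x) := by
  have hflat : ∀ k, α x k = ∑ m, g x m k * sharp g α x m := by
    intro k; rw [← flat_sharp hg hx α k]; rfl
  calc ∑ k, chr g k i j x * α x k
      = ∑ k, ∑ m, g x m k * sharp g α x m * chr g k i j x := by
        refine Finset.sum_congr rfl fun k _ => ?_
        rw [hflat k, Finset.mul_sum]
        exact Finset.sum_congr rfl fun m _ => by ring
    _ = ∑ m, sharp g α x m * ∑ k, g x k m * chr g k i j x := by
        rw [Finset.sum_comm]
        refine Finset.sum_congr rfl fun m _ => ?_
        rw [Finset.mul_sum]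
        refine Finset.sum_congr rfl fun k _ => ?_
        rw [g_symm hg hx m k]; ring
    _ = ∑ m, sharp g α x m * ((1/2) * (RG.pd i (fun y => g y j m) x
          + RG.pd j (fun y => g y i m) x - RG.pd m (fun y => g y i j) x)) := by
        refine Finset.sum_congr rfl fun m _ => ?_
        rw [g_chr hg hx]
    _ = (1/2) * ∑ m, sharp g α x m *
        (RG.pd i (fun y => g y j m) x + RG.pd j (fun y => g y i m) x
          - RG.pd m (fun y => g y i j) x) := by
        rw [Finset.mul_sum]
        exact Finset.sum_congr rfl fun m _ => by ring

/-- `pairF (flat Z) W = gV Z W` (pure algebra). -/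
lemma pairF_flat (Z W : VF n) (x : Pt n) : pairF (flat g Z) W x = gV g Z W x := by
  simp only [pairF, flat, gV, Finset.sum_mul]
  exact Finset.sum_comm

/-- `gF ω (flat Z) = pairF ω Z` on `U`. -/
lemma gF_flat (hg : IsRiemannOn U g) {x : Pt n} (hx : x ∈ U) (ω : OneForm n) (Z : VF n) :
    gF g ω (flat g Z) x = pairF ω Z x := by
  simp only [gF, flat, pairF]
  calc ∑ i, ∑ j, ginv g x i j * ω x i * ∑ k, g x k j * Z x k
      = ∑ i, ∑ j, ∑ k, ginv g x i j * ω x i * (g x k j * Z x k) := by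
        simp only [Finset.mul_sum]
    _ = ∑ i, ∑ k, ∑ j, ginv g x i j * ω x i * (g x k j * Z x k) :=
        Finset.sum_congr rfl fun i _ => Finset.sum_comm
    _ = ∑ i, ∑ k, ω x i * ((∑ j, ginv g x i j * g x j k) * Z x k) := by
        refine Finset.sum_congr rfl fun i _ => Finset.sum_congr rfl fun k _ => ?_
        rw [Finset.sum_mul, Finset.mul_sum]
        refine Finset.sum_congr rfl fun j _ => ?_
        rw [g_symm hg hx k j]; ring
    _ = ∑ i, ω x i * Z x i := by
        refine Finset.sum_congr rfl fun i _ => ?_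
        rw [← Finset.mul_sum]
        congr 1
        calc ∑ k, (∑ j, ginv g x i j * g x j k) * Z x k
            = ∑ k, (if i = k then (1:ℝ) else 0) * Z x k :=
              Finset.sum_congr rfl fun k _ => by rw [ginv_mul_g hg hx]
          _ = Z x i := by simp

/-- `gF` is symmetric on `U`. -/
lemma gF_symm (hg : IsRiemannOn U g) {x : Pt n} (hx : x ∈ U) (ω τ : OneForm n) :
    gF g ω τ x = gF g τ ω x := by
  simp only [gF]
  rw [Finset.sum_comm]
  refine Finset.sum_congr rfl fun i _ => Finset.sum_congr rfl fun j _ => ?_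
  rw [ginv_symm hg hx j i]; ring

/-- `pairF (dF f) Z = Z f`. -/
lemma pairF_dF {f : Pt n → ℝ} {x : Pt n} (hf : DifferentiableAt ℝ f x) (Z : VF n) :
    pairF (dF f) Z x = fderiv ℝ f x (Z x) := by
  rw [fderiv_eq_sum_pd hf]
  simp only [pairF, dF]
  exact Finset.sum_congr rfl fun i _ => by ring

/-- L6: `γ(β♯) = β(γ♯)` on `U`. -/
lemma pairF_sharp_symm (hg : IsRiemannOn U g) {x : Pt n} (hx : x ∈ U) (ω τ : OneForm n) :
    pairF ω (sharp g τ) x = pairF τ (sharp g ω) x := by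
  simp only [pairF, sharp, Finset.mul_sum]
  rw [Finset.sum_comm]
  refine Finset.sum_congr rfl fun i _ => Finset.sum_congr rfl fun s _ => ?_
  rw [ginv_symm hg hx s i]; ring

/-- `gV` is symmetric on `U`. -/
lemma gV_symm (hg : IsRiemannOn U g) {x : Pt n} (hx : x ∈ U) (Z W : VF n) :
    gV g Z W x = gV g W Z x := by
  simp only [gV]
  rw [Finset.sum_comm]
  refine Finset.sum_congr rfl fun i _ => Finset.sum_congr rfl fun j _ => ?_
  rw [g_symm hg hx j i]; ring

lemma bracket_antisymm (X Y : VF n) (x : Pt n) (k : Fin n) :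
    bracket X Y x k = - bracket Y X x k := by
  simp only [bracket]; ring

/-- Expansion of the derivative of a pairing. -/
lemma D_pairF (hU : IsOpen U) {x : Pt n} (hx : x ∈ U) {ω : OneForm n} (hω : SmoothSec U ω)
    {Z : VF n} (hZ : ∀ k, SmOn U (fun x => Z x k)) (v : Fin n → ℝ) :
    fderiv ℝ (pairF ω Z) x v
      = ∑ j, (fderiv ℝ (fun y => ω y j) x v * Z x j
          + ω x j * fderiv ℝ (fun y => Z y j) x v) := by
  have h2 : pairF ω Z = fun y => ∑ j, (fun j y => ω y j * Z y j) j y := rfl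
  rw [h2, D_sum (fun j _ => (SmOn.diffAt hU (hω j) hx).fun_mul (SmOn.diffAt hU (hZ j) hx)) v]
  exact Finset.sum_congr rfl fun j _ =>
    D_mul (SmOn.diffAt hU (hω j) hx) (SmOn.diffAt hU (hZ j) hx) v

/-- L5: pairing of a closed form with a bracket. -/
lemma pairF_bracket (hU : IsOpen U) {δ : OneForm n} (hδ : SmoothSec U δ)
    (hcδ : IsClosedOn U δ) {X Y : VF n} (hX : ∀ k, SmOn U (fun x => X x k))
    (hY : ∀ k, SmOn U (fun x => Y x k)) {x : Pt n} (hx : x ∈ U) :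
    pairF δ (bracket X Y) x
      = fderiv ℝ (pairF δ Y) x (X x) - fderiv ℝ (pairF δ X) x (Y x) := by
  rw [D_pairF hU hx hδ hY (X x), D_pairF hU hx hδ hX (Y x)]
  have hδd : ∀ j, DifferentiableAt ℝ (fun y => δ y j) x := fun j => SmOn.diffAt hU (hδ j) hx
  simp only [pairF, bracket]
  have hkey : ∑ j, (fderiv ℝ (fun y => δ y j) x (X x) * Y x j
      - fderiv ℝ (fun y => δ y j) x (Y x) * X x j) = 0 := by
    have hexp : ∀ j, fderiv ℝ (fun y => δ y j) x (X x) * Y x j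
        - fderiv ℝ (fun y => δ y j) x (Y x) * X x j
        = ∑ s, (RG.pd s (fun y => δ y j) x * X x s * Y x j
            - RG.pd s (fun y => δ y j) x * Y x s * X x j) := by
      intro j
      rw [fderiv_eq_sum_pd (hδd j) (X x), fderiv_eq_sum_pd (hδd j) (Y x),
        Finset.sum_mul, Finset.sum_mul, ← Finset.sum_sub_distrib]
      exact Finset.sum_congr rfl fun s _ => by ring
    simp only [hexp]
    simp only [Finset.sum_sub_distrib]
    rw [sub_eq_zero]
    rw [Finset.sum_comm]
    refine Finset.sum_congr rfl fun u _ => Finset.sum_congr rfl fun v _ => ?_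
    rw [hcδ x hx u v]; ring
  have expand : ∑ j, ((fderiv ℝ (fun y => δ y j) x (X x) * Y x j
        + δ x j * fderiv ℝ (fun y => Y y j) x (X x))
      - (fderiv ℝ (fun y => δ y j) x (Y x) * X x j
        + δ x j * fderiv ℝ (fun y => X y j) x (Y x)))
      = (∑ j, (fderiv ℝ (fun y => δ y j) x (X x) * Y x j
          - fderiv ℝ (fun y => δ y j) x (Y x) * X x j))
        + ∑ j, δ x j * (fderiv ℝ (fun y => Y y j) x (X x)
          - fderiv ℝ (fun y => X y j) x (Y x)) := by
    rw [← Finset.sum_add_distrib]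
    exact Finset.sum_congr rfl fun j _ => by ring
  rw [← Finset.sum_sub_distrib, expand, hkey, zero_add]

/-- L7: the bracket acts on functions as the commutator of derivations. -/
lemma dder_bracket_fun (hU : IsOpen U) {f : Pt n → ℝ} (hf : SmOn U f)
    {X Y : VF n} (hX : ∀ k, SmOn U (fun x => X x k)) (hY : ∀ k, SmOn U (fun x => Y x k))
    {x : Pt n} (hx : x ∈ U) :
    fderiv ℝ f x (bracket X Y x)
      = fderiv ℝ (RG.dder Y f) x (X x) - fderiv ℝ (RG.dder X f) x (Y x) := by
  have hfd : DifferentiableAt ℝ (fderiv ℝ f) x :=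
    ((hf.fderiv_of_isOpen (m := (⊤ : ℕ∞)) hU (by simp)).contDiffAt (hU.mem_nhds hx)).differentiableAt (by simp)
  have hXpi : DifferentiableAt ℝ X x :=
    differentiableAt_pi.2 fun k => SmOn.diffAt hU (hX k) hx
  have hYpi : DifferentiableAt ℝ Y x :=
    differentiableAt_pi.2 fun k => SmOn.diffAt hU (hY k) hx
  have hev : ∀ᶠ y in nhds x, HasFDerivAt f (fderiv ℝ f y) y := by
    filter_upwards [hU.mem_nhds hx] with y hy using (hf.diffAt hU hy).hasFDerivAt
  have hsym := second_derivative_symmetric_of_eventually hev hfd.hasFDerivAt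
  have h1 : fderiv ℝ (RG.dder Y f) x (X x)
      = fderiv ℝ f x (fderiv ℝ Y x (X x)) + fderiv ℝ (fderiv ℝ f) x (X x) (Y x) := by
    rw [show RG.dder Y f = fun y => (fderiv ℝ f y) (Y y) from rfl,
      fderiv_clm_apply hfd hYpi]
    simp
  have h2 : fderiv ℝ (RG.dder X f) x (Y x)
      = fderiv ℝ f x (fderiv ℝ X x (Y x)) + fderiv ℝ (fderiv ℝ f) x (Y x) (X x) := by
    rw [show RG.dder X f = fun y => (fderiv ℝ f y) (X y) from rfl,
      fderiv_clm_apply hfd hXpi]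
    simp
  have hbr : bracket X Y x = fderiv ℝ Y x (X x) - fderiv ℝ X x (Y x) := by
    funext k
    have hXk : (fderiv ℝ X x) (Y x) k = fderiv ℝ (fun y => X y k) x (Y x) := by
      rw [fderiv_pi fun i => SmOn.diffAt hU (hX i) hx]; rfl
    have hYk : (fderiv ℝ Y x) (X x) k = fderiv ℝ (fun y => Y y k) x (X x) := by
      rw [fderiv_pi fun i => SmOn.diffAt hU (hY i) hx]; rfl
    simp only [bracket, Pi.sub_apply, hXk, hYk]
  rw [h1, h2, hbr, map_sub, hsym (X x) (Y x)]
  ring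

/-- L1: Leibniz rule for the covariant derivative pairing. -/
lemma pairF_covF (hU : IsOpen U) (hg : IsRiemannOn U g) {x : Pt n} (hx : x ∈ U)
    (X : VF n) {ω : OneForm n} (hω : SmoothSec U ω) {Y : VF n}
    (hY : ∀ k, SmOn U (fun x => Y x k)) :
    pairF (covF g X ω) Y x
      = fderiv ℝ (pairF ω Y) x (X x) - pairF ω (covV g X Y) x := by
  rw [D_pairF hU hx hω hY (X x)]
  simp only [pairF, covF, covV]
  have e1 : ∑ j, (fderiv ℝ (fun y => ω y j) x (X x)
        - ∑ i, ∑ k, X x i * chr g k i j x * ω x k) * Y x j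
      = (∑ j, fderiv ℝ (fun y => ω y j) x (X x) * Y x j)
        - ∑ j, (∑ i, ∑ k, X x i * chr g k i j x * ω x k) * Y x j := by
    rw [← Finset.sum_sub_distrib]
    exact Finset.sum_congr rfl fun j _ => by ring
  have e2 : ∑ k, ω x k * (fderiv ℝ (fun y => Y y k) x (X x)
        + ∑ i, ∑ j, chr g k i j x * X x i * Y x j)
      = (∑ k, ω x k * fderiv ℝ (fun y => Y y k) x (X x))
        + ∑ k, ω x k * ∑ i, ∑ j, chr g k i j x * X x i * Y x j := by
    rw [← Finset.sum_add_distrib]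
    exact Finset.sum_congr rfl fun k _ => by ring
  have e3 : ∑ j, (fderiv ℝ (fun y => ω y j) x (X x) * Y x j
        + ω x j * fderiv ℝ (fun y => Y y j) x (X x))
      = (∑ j, fderiv ℝ (fun y => ω y j) x (X x) * Y x j)
        + ∑ j, ω x j * fderiv ℝ (fun y => Y y j) x (X x) := by
    rw [← Finset.sum_add_distrib]
  have e4 : ∑ j, (∑ i, ∑ k, X x i * chr g k i j x * ω x k) * Y x j
      = ∑ k, ω x k * ∑ i, ∑ j, chr g k i j x * X x i * Y x j := by
    calc ∑ j, (∑ i, ∑ k, X x i * chr g k i j x * ω x k) * Y x j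
        = ∑ j, ∑ i, ∑ k, X x i * chr g k i j x * ω x k * Y x j := by
          simp only [Finset.sum_mul]
      _ = ∑ j, ∑ k, ∑ i, X x i * chr g k i j x * ω x k * Y x j := sum_swap_inner
      _ = ∑ k, ∑ j, ∑ i, X x i * chr g k i j x * ω x k * Y x j := Finset.sum_comm
      _ = ∑ k, ∑ i, ∑ j, X x i * chr g k i j x * ω x k * Y x j :=
          Finset.sum_congr rfl fun _ _ => Finset.sum_comm
      _ = ∑ k, ω x k * ∑ i, ∑ j, chr g k i j x * X x i * Y x j := by
          refine Finset.sum_congr rfl fun k _ => ?_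
          simp only [Finset.mul_sum]
          exact Finset.sum_congr rfl fun i _ => Finset.sum_congr rfl fun j _ => by ring
  rw [e1, e2, e3, e4]
  ring

/-- L2: metric compatibility, `(∇_X (δ♯))♭ = ∇_X δ` on `U`. -/
lemma flat_covV_sharp (hU : IsOpen U) (hg : IsRiemannOn U g) {x : Pt n} (hx : x ∈ U)
    (X : VF n) {δ : OneForm n} (hδ : SmoothSec U δ) (j : Fin n) :
    flat g (covV g X (sharp g δ)) x j = covF g X δ x j := by
  set v := X x with hv
  set d := sharp g δ with hd
  -- the common normal form
  have hRHS : covF g X δ x j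
      = fderiv ℝ (fun y => δ y j) x v
        - ∑ i, ∑ m, X x i * d x m * ((1/2) * (RG.pd i (fun y => g y j m) x
            + RG.pd j (fun y => g y i m) x - RG.pd m (fun y => g y i j) x)) := by
    simp only [covF]
    congr 1
    calc ∑ i, ∑ k, X x i * chr g k i j x * δ x k
        = ∑ i, X x i * ∑ k, chr g k i j x * δ x k := by
          refine Finset.sum_congr rfl fun i _ => ?_
          rw [Finset.mul_sum]
          exact Finset.sum_congr rfl fun k _ => by ring
      _ = ∑ i, X x i * ((1/2) * ∑ m, d x m * (RG.pd i (fun y => g y j m) x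
            + RG.pd j (fun y => g y i m) x - RG.pd m (fun y => g y i j) x)) := by
          refine Finset.sum_congr rfl fun i _ => ?_
          rw [chr_contract hg hx δ i j]
      _ = ∑ i, ∑ m, X x i * d x m * ((1/2) * (RG.pd i (fun y => g y j m) x
            + RG.pd j (fun y => g y i m) x - RG.pd m (fun y => g y i j) x)) := by
          refine Finset.sum_congr rfl fun i _ => ?_
          rw [Finset.mul_sum, Finset.mul_sum]
          exact Finset.sum_congr rfl fun m _ => by ring
  rw [hRHS]
  -- expand the left-hand side
  simp only [flat, covV]
  have hsplit : ∑ k, g x k j * (fderiv ℝ (fun y => d y k) x v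
        + ∑ i, ∑ l, chr g k i l x * X x i * d x l)
      = (∑ k, g x k j * fderiv ℝ (fun y => d y k) x v)
        + ∑ k, g x k j * ∑ i, ∑ l, chr g k i l x * X x i * d x l := by
    rw [← Finset.sum_add_distrib]
    exact Finset.sum_congr rfl fun k _ => by ring
  rw [hsplit]
  -- first piece via P2
  have hP2 := D_flat_sharp hU hg hx hδ j v
  rw [Finset.sum_add_distrib] at hP2
  have h1 : ∑ k, g x k j * fderiv ℝ (fun y => d y k) x v
      = fderiv ℝ (fun y => δ y j) x v
        - ∑ k, fderiv ℝ (fun y => g y k j) x v * d x k := by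
    rw [← hP2, ← hd]; ring
  rw [h1]
  -- second piece via lowered Christoffel
  have h2 : ∑ k, g x k j * ∑ i, ∑ l, chr g k i l x * X x i * d x l
      = ∑ i, ∑ l, X x i * d x l * ((1/2) * (RG.pd i (fun y => g y l j) x
          + RG.pd l (fun y => g y i j) x - RG.pd j (fun y => g y i l) x)) := by
    calc ∑ k, g x k j * ∑ i, ∑ l, chr g k i l x * X x i * d x l
        = ∑ k, ∑ i, ∑ l, g x k j * (chr g k i l x * X x i * d x l) := by
          simp only [Finset.mul_sum]
      _ = ∑ i, ∑ k, ∑ l, g x k j * (chr g k i l x * X x i * d x l) := Finset.sum_comm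
      _ = ∑ i, ∑ l, ∑ k, g x k j * (chr g k i l x * X x i * d x l) := sum_swap_inner
      _ = ∑ i, ∑ l, X x i * d x l * ∑ k, g x k j * chr g k i l x := by
          refine Finset.sum_congr rfl fun i _ => Finset.sum_congr rfl fun l _ => ?_
          rw [Finset.mul_sum]
          exact Finset.sum_congr rfl fun k _ => by ring
      _ = ∑ i, ∑ l, X x i * d x l * ((1/2) * (RG.pd i (fun y => g y l j) x
            + RG.pd l (fun y => g y i j) x - RG.pd j (fun y => g y i l) x)) := by
          refine Finset.sum_congr rfl fun i _ => Finset.sum_congr rfl fun l _ => ?_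
          rw [g_chr hg hx i l j]
  rw [h2]
  -- expand the remaining full derivative of g into partials and compare termwise
  have h3 : ∑ k, fderiv ℝ (fun y => g y k j) x v * d x k
      = ∑ i, ∑ l, X x i * d x l * RG.pd i (fun y => g y l j) x := by
    calc ∑ k, fderiv ℝ (fun y => g y k j) x v * d x k
        = ∑ k, ∑ i, X x i * d x k * RG.pd i (fun y => g y k j) x := by
          refine Finset.sum_congr rfl fun k _ => ?_
          rw [fderiv_eq_sum_pd (SmOn.diffAt hU (hg.1 k j) hx) v, Finset.sum_mul]
          exact Finset.sum_congr rfl fun i _ => by rw [hv]; ring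
      _ = ∑ i, ∑ l, X x i * d x l * RG.pd i (fun y => g y l j) x := Finset.sum_comm
  rw [h3]
  have hfin : (∑ i, ∑ l, X x i * d x l * RG.pd i (fun y => g y l j) x)
      - ∑ i, ∑ l, X x i * d x l * ((1/2) * (RG.pd i (fun y => g y l j) x
          + RG.pd l (fun y => g y i j) x - RG.pd j (fun y => g y i l) x))
      = ∑ i, ∑ m, X x i * d x m * ((1/2) * (RG.pd i (fun y => g y j m) x
          + RG.pd j (fun y => g y i m) x - RG.pd m (fun y => g y i j) x)) := by
    rw [← Finset.sum_sub_distrib]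
    refine Finset.sum_congr rfl fun i _ => ?_
    rw [← Finset.sum_sub_distrib]
    refine Finset.sum_congr rfl fun l _ => ?_
    rw [pd_g_symm hU hg hx i l j]
    ring
  linarith [hfin]

/-- C2: contracting the metric with the derivative of a sharp. -/
lemma g_D_sharp (hU : IsOpen U) (hg : IsRiemannOn U g) {x : Pt n} (hx : x ∈ U)
    {σ : OneForm n} (hσ : SmoothSec U σ) (k : Fin n) (v : Fin n → ℝ) :
    ∑ i, g x i k * fderiv ℝ (fun y => sharp g σ y i) x v
      = fderiv ℝ (fun y => σ y k) x v
        - ∑ i, fderiv ℝ (fun y => g y i k) x v * sharp g σ x i := by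
  have h := D_flat_sharp hU hg hx hσ k v
  rw [Finset.sum_add_distrib] at h
  linarith

/-- Key lemma (I): for closed `β, γ`, `2∇_{β♯}γ = d(γ(β♯)) + [β♯,γ♯]♭`. -/
lemma two_covF_sharp (hU : IsOpen U) (hg : IsRiemannOn U g) {x : Pt n} (hx : x ∈ U)
    {β γ : OneForm n} (hβ : SmoothSec U β) (hγ : SmoothSec U γ)
    (hcβ : IsClosedOn U β) (hcγ : IsClosedOn U γ) (j : Fin n) :
    2 * covF g (sharp g β) γ x j
      = RG.pd j (pairF γ (sharp g β)) x
        + flat g (bracket (sharp g β) (sharp g γ)) x j := by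
  have hb := sm_sharp hU hg hβ
  have hdγ : ∀ i, DifferentiableAt ℝ (fun y => γ y i) x := fun i => SmOn.diffAt hU (hγ i) hx
  have hdβ : ∀ i, DifferentiableAt ℝ (fun y => β y i) x := fun i => SmOn.diffAt hU (hβ i) hx
  have hdg : ∀ i k, DifferentiableAt ℝ (fun y => g y i k) x :=
    fun i k => SmOn.diffAt hU (hg.1 i k) hx
  have hpd_eq : ∀ f : Pt n → ℝ, fderiv ℝ f x (Pi.single j 1) = RG.pd j f x := fun f => rfl
  set P := ∑ i, ∑ m, sharp g β x i * sharp g γ x m * RG.pd i (fun y => g y j m) x with hP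
  set Q := ∑ i, ∑ m, sharp g β x i * sharp g γ x m * RG.pd j (fun y => g y i m) x with hQ
  set R := ∑ i, ∑ m, sharp g β x i * sharp g γ x m * RG.pd m (fun y => g y i j) x with hR
  set A := ∑ k, ∑ i, sharp g γ x k * sharp g β x i * RG.pd j (fun y => g y i k) x with hA
  set B := ∑ k, ∑ i, sharp g β x i * RG.pd i (fun y => g y k j) x * sharp g γ x k with hB
  set C := ∑ k, ∑ i, sharp g γ x i * RG.pd i (fun y => g y k j) x * sharp g β x k with hC
  set D0 := fderiv ℝ (fun y => γ y j) x (sharp g β x) with hD0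
  set W := ∑ k, sharp g γ x k * RG.pd j (fun y => β y k) x with hW
  -- LHS normal form
  have hLHS : 2 * covF g (sharp g β) γ x j = 2 * D0 - (P + Q - R) := by
    simp only [covF]
    have hchr : ∑ i, ∑ k, sharp g β x i * chr g k i j x * γ x k
        = (1/2) * (P + Q - R) := by
      calc ∑ i, ∑ k, sharp g β x i * chr g k i j x * γ x k
          = ∑ i, sharp g β x i * ∑ k, chr g k i j x * γ x k := by
            refine Finset.sum_congr rfl fun i _ => ?_
            rw [Finset.mul_sum]
            exact Finset.sum_congr rfl fun k _ => by ring
        _ = ∑ i, sharp g β x i * ((1/2) * ∑ m, sharp g γ x m *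
              (RG.pd i (fun y => g y j m) x + RG.pd j (fun y => g y i m) x
                - RG.pd m (fun y => g y i j) x)) := by
            refine Finset.sum_congr rfl fun i _ => ?_
            rw [chr_contract hg hx γ i j]
        _ = ∑ i, ∑ m, (1/2) * (sharp g β x i * sharp g γ x m * RG.pd i (fun y => g y j m) x
              + sharp g β x i * sharp g γ x m * RG.pd j (fun y => g y i m) x
              - sharp g β x i * sharp g γ x m * RG.pd m (fun y => g y i j) x) := by
            refine Finset.sum_congr rfl fun i _ => ?_
            rw [Finset.mul_sum, Finset.mul_sum]
            exact Finset.sum_congr rfl fun m _ => by ring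
        _ = (1/2) * (P + Q - R) := by
            rw [hP, hQ, hR]
            simp only [mul_sub, mul_add, Finset.mul_sum]
            simp only [← Finset.sum_sub_distrib, ← Finset.sum_add_distrib]
    rw [hchr, ← hD0]
    ring
  -- closedness of γ
  have hclosedγ : ∑ i, fderiv ℝ (fun y => γ y i) x (Pi.single j 1) * sharp g β x i = D0 := by
    rw [hD0, fderiv_eq_sum_pd (hdγ j) (sharp g β x)]
    refine Finset.sum_congr rfl fun i _ => ?_
    simp only [hpd_eq]
    rw [hcγ x hx j i]; ring
  -- C1
  have hC1 : ∑ i, γ x i * fderiv ℝ (fun y => sharp g β y i) x (Pi.single j 1)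
      = W - A := by
    calc ∑ i, γ x i * fderiv ℝ (fun y => sharp g β y i) x (Pi.single j 1)
        = ∑ i, (∑ k, g x k i * sharp g γ x k)
            * fderiv ℝ (fun y => sharp g β y i) x (Pi.single j 1) := by
          refine Finset.sum_congr rfl fun i _ => ?_
          congr 1
          rw [← flat_sharp hg hx γ i]
          rfl
      _ = ∑ k, sharp g γ x k
            * ∑ i, g x i k * fderiv ℝ (fun y => sharp g β y i) x (Pi.single j 1) := by
          simp only [Finset.sum_mul]
          rw [Finset.sum_comm]
          refine Finset.sum_congr rfl fun k _ => ?_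
          rw [Finset.mul_sum]
          refine Finset.sum_congr rfl fun i _ => ?_
          rw [g_symm hg hx k i]; ring
      _ = ∑ k, sharp g γ x k * (fderiv ℝ (fun y => β y k) x (Pi.single j 1)
            - ∑ i, fderiv ℝ (fun y => g y i k) x (Pi.single j 1) * sharp g β x i) := by
          refine Finset.sum_congr rfl fun k _ => ?_
          rw [g_D_sharp hU hg hx hβ k (Pi.single j 1)]
      _ = W - A := by
          rw [hW, hA]
          simp only [hpd_eq]
          rw [← Finset.sum_sub_distrib]
          refine Finset.sum_congr rfl fun k _ => ?_
          rw [mul_sub]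
          congr 1
          rw [Finset.mul_sum]
          exact Finset.sum_congr rfl fun i _ => by ring
  -- T1 normal form
  have hT1 : RG.pd j (pairF γ (sharp g β)) x = D0 + (W - A) := by
    have h0 : RG.pd j (pairF γ (sharp g β)) x
        = fderiv ℝ (pairF γ (sharp g β)) x (Pi.single j 1) := rfl
    rw [h0, D_pairF hU hx hγ hb (Pi.single j 1), Finset.sum_add_distrib, hclosedγ, hC1]
  -- T2 normal form
  have hT2 : flat g (bracket (sharp g β) (sharp g γ)) x j = (D0 - B) - (W - C) := by
    simp only [flat, bracket]
    have hsplit : ∑ i, g x i j * (fderiv ℝ (fun y => sharp g γ y i) x (sharp g β x)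
          - fderiv ℝ (fun y => sharp g β y i) x (sharp g γ x))
        = (∑ i, g x i j * fderiv ℝ (fun y => sharp g γ y i) x (sharp g β x))
          - ∑ i, g x i j * fderiv ℝ (fun y => sharp g β y i) x (sharp g γ x) := by
      rw [← Finset.sum_sub_distrib]
      exact Finset.sum_congr rfl fun i _ => by ring
    rw [hsplit, g_D_sharp hU hg hx hγ j (sharp g β x), g_D_sharp hU hg hx hβ j (sharp g γ x)]
    have e1 : ∑ i, fderiv ℝ (fun y => g y i j) x (sharp g β x) * sharp g γ x i = B := by
      rw [hB]
      refine Finset.sum_congr rfl fun k _ => ?_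
      rw [fderiv_eq_sum_pd (hdg k j) (sharp g β x), Finset.sum_mul]
    have e2 : ∑ i, fderiv ℝ (fun y => g y i j) x (sharp g γ x) * sharp g β x i = C := by
      rw [hC]
      refine Finset.sum_congr rfl fun k _ => ?_
      rw [fderiv_eq_sum_pd (hdg k j) (sharp g γ x), Finset.sum_mul]
    have e4 : fderiv ℝ (fun y => β y j) x (sharp g γ x) = W := by
      rw [hW, fderiv_eq_sum_pd (hdβ j) (sharp g γ x)]
      refine Finset.sum_congr rfl fun k _ => ?_
      rw [hcβ x hx j k]
    rw [e1, e2, e4, ← hD0]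
  -- index gymnastics
  have hBP : B = P := by
    rw [hB, hP, Finset.sum_comm]
    refine Finset.sum_congr rfl fun i _ => Finset.sum_congr rfl fun k _ => ?_
    rw [pd_g_symm hU hg hx i k j]
    ring
  have hAQ : A = Q := by
    rw [hA, hQ, Finset.sum_comm]
    refine Finset.sum_congr rfl fun i _ => Finset.sum_congr rfl fun k _ => ?_
    ring
  have hCR : C = R := by
    rw [hC, hR]
    refine Finset.sum_congr rfl fun k _ => Finset.sum_congr rfl fun i _ => ?_
    ring
  rw [hLHS, hT1, hT2]
  linarith [hBP, hAQ, hCR]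

end RGAux

open RGAux in
/-- For closed smooth 1-forms `α β γ δ`:
`4(∇_{α♯}∇_{β♯}γ)(δ♯) = −g⁻¹(d(γ(β♯)), d(δ(α♯))) + g([δ♯,α♯],[β♯,γ♯])
 + 2α♯β♯(γ(δ♯)) − 2α♯γ♯(δ(β♯)) + α♯δ♯(β(γ♯)) − [β♯,γ♯](δ(α♯)) + δ♯α♯(β(γ♯))`. -/
theorem second_covariant_derivative_formula {n : ℕ} (U : Set (Pt n)) (hU : IsOpen U)
    (g : Met n) (hg : IsRiemannOn U g)
    (α β γ δ : OneForm n)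
    (hα : SmoothSec U α) (hβ : SmoothSec U β) (hγ : SmoothSec U γ) (hδ : SmoothSec U δ)
    (hcα : IsClosedOn U α) (hcβ : IsClosedOn U β) (hcγ : IsClosedOn U γ)
    (hcδ : IsClosedOn U δ) :
    ∀ x ∈ U,
      4 * pairF (covF g (sharp g α) (covF g (sharp g β) γ)) (sharp g δ) x =
        - gF g (dF (pairF γ (sharp g β))) (dF (pairF δ (sharp g α))) x
        + gV g (bracket (sharp g δ) (sharp g α)) (bracket (sharp g β) (sharp g γ)) x
        + 2 * dder (sharp g α) (dder (sharp g β) (pairF γ (sharp g δ))) x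
        - 2 * dder (sharp g α) (dder (sharp g γ) (pairF δ (sharp g β))) x
        + dder (sharp g α) (dder (sharp g δ) (pairF β (sharp g γ))) x
        - dder (bracket (sharp g β) (sharp g γ)) (pairF δ (sharp g α)) x
        + dder (sharp g δ) (dder (sharp g α) (pairF β (sharp g γ))) x := by
  intro x hx
  -- abbreviations
  set a : VF n := sharp g α with ha
  set b : VF n := sharp g β with hb
  set c : VF n := sharp g γ with hc
  set d : VF n := sharp g δ with hd
  set p : Pt n → ℝ := pairF γ (sharp g β) with hp
  set q : Pt n → ℝ := pairF δ (sharp g α) with hq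
  set η : OneForm n := fun y k => dF p y k + flat g (bracket b c) y k with hη
  -- smoothness facts
  have haS : ∀ k, SmOn U (fun y => a y k) := sm_sharp hU hg hα
  have hbS : ∀ k, SmOn U (fun y => b y k) := sm_sharp hU hg hβ
  have hcS : ∀ k, SmOn U (fun y => c y k) := sm_sharp hU hg hγ
  have hdS : ∀ k, SmOn U (fun y => d y k) := sm_sharp hU hg hδ
  have hpS : SmOn U p := sm_pairF hU hγ hbS
  have hqS : SmOn U q := sm_pairF hU hδ haS
  have hbrbcS : ∀ k, SmOn U (fun y => bracket b c y k) := sm_bracket hU hbS hcS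
  have hηS : SmoothSec U η := fun k => (sm_dF hU hpS k).add (sm_flat hg hbrbcS k)
  have hcovS : ∀ j, SmOn U (fun y => covF g b γ y j) := sm_covF hU hg hbS hγ
  -- Step 1: η = 2 ∇_b γ on U, hence 4 (∇_a ∇_b γ)(d) = 2 (∇_a η)(d)
  have hη2 : ∀ y ∈ U, ∀ k, η y k = 2 * covF g b γ y k := by
    intro y hy k
    rw [hη]
    exact (two_covF_sharp hU hg hy hβ hγ hcβ hcγ k).symm
  have hS1 : pairF (covF g a η) d x = 2 * pairF (covF g a (covF g b γ)) d x := by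
    have hcomp : ∀ j, covF g a η x j = 2 * covF g a (covF g b γ) x j := by
      intro j
      have h1 : covF g a η x j
          = fderiv ℝ (fun y => η y j) x (a x)
            - ∑ i, ∑ k, a x i * chr g k i j x * η x k := rfl
      have h2 : covF g a (covF g b γ) x j
          = fderiv ℝ (fun y => covF g b γ y j) x (a x)
            - ∑ i, ∑ k, a x i * chr g k i j x * covF g b γ x k := rfl
      rw [h1, h2]
      have hder : fderiv ℝ (fun y => η y j) x
          = fderiv ℝ (fun y => 2 * covF g b γ y j) x :=
        D_congr hU hx (fun y hy => hη2 y hy j)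
      have hder2 : fderiv ℝ (fun y => 2 * covF g b γ y j) x (a x)
          = 2 * fderiv ℝ (fun y => covF g b γ y j) x (a x) :=
        D_const_mul (SmOn.diffAt hU (hcovS j) hx) 2 (a x)
      rw [hder, hder2]
      have hsum : ∑ i, ∑ k, a x i * chr g k i j x * η x k
          = 2 * ∑ i, ∑ k, a x i * chr g k i j x * covF g b γ x k := by
        simp only [Finset.mul_sum]
        refine Finset.sum_congr rfl fun i _ => Finset.sum_congr rfl fun k _ => ?_
        rw [hη2 x hx k]; ring
      rw [hsum]; ring
    simp only [pairF, hcomp, Finset.mul_sum]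
    exact Finset.sum_congr rfl fun j _ => by ring
  -- Step 2: Leibniz
  have hS2 : pairF (covF g a η) d x
      = fderiv ℝ (pairF η d) x (a x) - pairF η (covV g a d) x :=
    pairF_covF hU hg hx a hηS hdS
  -- Step 3: the derivative term
  set F1 : Pt n → ℝ := dder d p with hF1
  set F2 : Pt n → ℝ := dder b (pairF γ (sharp g δ)) with hF2
  set F3 : Pt n → ℝ := dder c (pairF δ (sharp g β)) with hF3
  have hpairηd : ∀ y ∈ U, pairF η d y = F1 y + (F2 y - F3 y) := by
    intro y hy
    have hsplit : pairF η d y = pairF (dF p) d y + pairF (flat g (bracket b c)) d y := by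
      simp only [pairF, hη, ← Finset.sum_add_distrib]
      exact Finset.sum_congr rfl fun i _ => by ring
    have h1 : pairF (dF p) d y = F1 y := pairF_dF (SmOn.diffAt hU hpS hy) d
    have h2 : pairF (flat g (bracket b c)) d y = F2 y - F3 y := by
      have e1 : pairF (flat g (bracket b c)) d y = gV g (bracket b c) d y :=
        pairF_flat (bracket b c) d y
      have e2 : gV g (bracket b c) d y = pairF δ (bracket b c) y := by
        rw [gV_symm hg hy (bracket b c) d, ← pairF_flat d (bracket b c) y]
        simp only [pairF]
        exact Finset.sum_congr rfl fun i _ => by rw [hd, flat_sharp hg hy δ i]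
      have e3 : pairF δ (bracket b c) y
          = fderiv ℝ (pairF δ c) y (b y) - fderiv ℝ (pairF δ b) y (c y) :=
        pairF_bracket hU hδ hcδ hbS hcS hy
      have e4 : fderiv ℝ (pairF δ c) y = fderiv ℝ (pairF γ (sharp g δ)) y :=
        D_congr hU hy (fun z hz => by rw [hc]; exact pairF_sharp_symm hg hz δ γ)
      rw [e1, e2, e3, e4, hF2, hF3, hb]
      rfl
    rw [hsplit, h1, h2]
  have hS3 : fderiv ℝ (pairF η d) x (a x)
      = fderiv ℝ F1 x (a x) + (fderiv ℝ F2 x (a x) - fderiv ℝ F3 x (a x)) := by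
    have hF1S : SmOn U F1 := SmOn.dder hU hpS hdS
    have hF2S : SmOn U F2 := SmOn.dder hU (sm_pairF hU hγ hdS) hbS
    have hF3S : SmOn U F3 := SmOn.dder hU (sm_pairF hU hδ hbS) hcS
    have hcongr : fderiv ℝ (pairF η d) x
        = fderiv ℝ (fun y => F1 y + (F2 y - F3 y)) x := D_congr hU hx hpairηd
    rw [hcongr, D_add (SmOn.diffAt hU hF1S hx)
      ((SmOn.diffAt hU hF2S hx).fun_sub (SmOn.diffAt hU hF3S hx)),
      D_sub (SmOn.diffAt hU hF2S hx) (SmOn.diffAt hU hF3S hx)]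
  -- Step 4: the covV term
  have hS4 : 2 * pairF η (covV g a d) x
      = gF g (dF p) (dF q) x
        + (fderiv ℝ F1 x (a x) - fderiv ℝ (dder a p) x (d x))
        + fderiv ℝ q x (bracket b c x)
        + gV g (bracket b c) (bracket a d) x := by
    have e0 : pairF η (covV g a d) x = gF g η (covF g a δ) x := by
      rw [← gF_flat hg hx η (covV g a d)]
      simp only [gF]
      refine Finset.sum_congr rfl fun i _ => Finset.sum_congr rfl fun j _ => ?_
      rw [hd, flat_covV_sharp hU hg hx a hδ j, ha]
    have e1 : ∀ j, 2 * covF g a δ x j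
        = RG.pd j q x + flat g (bracket a d) x j := by
      intro j
      rw [hq, ha, hd]
      exact two_covF_sharp hU hg hx hα hδ hcα hcδ j
    have e2 : 2 * gF g η (covF g a δ) x
        = gF g η (fun y k => RG.pd k q y + flat g (bracket a d) y k) x := by
      simp only [gF, Finset.mul_sum]
      refine Finset.sum_congr rfl fun i _ => Finset.sum_congr rfl fun j _ => ?_
      have := e1 j
      have hpdq : RG.pd j q x + flat g (bracket a d) x j = 2 * covF g a δ x j := this.symm
      rw [hpdq]; ring
    rw [e0, e2]
    -- expand the bilinear pairing into four pieces
    have e3 : gF g η (fun y k => RG.pd k q y + flat g (bracket a d) y k) x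
        = gF g (dF p) (dF q) x + gF g (dF p) (flat g (bracket a d)) x
          + gF g (flat g (bracket b c)) (dF q) x
          + gF g (flat g (bracket b c)) (flat g (bracket a d)) x := by
      simp only [gF, hη, dF, ← Finset.sum_add_distrib]
      exact Finset.sum_congr rfl fun i _ => Finset.sum_congr rfl fun j _ => by ring
    rw [e3]
    have e4 : gF g (dF p) (flat g (bracket a d)) x
        = fderiv ℝ F1 x (a x) - fderiv ℝ (dder a p) x (d x) := by
      rw [gF_flat hg hx (dF p) (bracket a d), pairF_dF (SmOn.diffAt hU hpS hx) (bracket a d),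
        dder_bracket_fun hU hpS haS hdS hx, hF1]
    have e5 : gF g (flat g (bracket b c)) (dF q) x = fderiv ℝ q x (bracket b c x) := by
      rw [gF_symm hg hx (flat g (bracket b c)) (dF q),
        gF_flat hg hx (dF q) (bracket b c), pairF_dF (SmOn.diffAt hU hqS hx) (bracket b c)]
    have e6 : gF g (flat g (bracket b c)) (flat g (bracket a d)) x
        = gV g (bracket b c) (bracket a d) x := by
      rw [gF_flat hg hx (flat g (bracket b c)) (bracket a d),
        pairF_flat (bracket b c) (bracket a d) x]
    rw [e4, e5, e6]
  -- the sign flip for the bracket-bracket term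
  have hsign : gV g (bracket b c) (bracket a d) x
      = - gV g (bracket d a) (bracket b c) x := by
    rw [gV_symm hg hx (bracket b c) (bracket a d)]
    simp only [gV]
    rw [← Finset.sum_neg_distrib]
    refine Finset.sum_congr rfl fun i _ => ?_
    rw [← Finset.sum_neg_distrib]
    refine Finset.sum_congr rfl fun j _ => ?_
    rw [bracket_antisymm a d x i]
    ring
  -- identification of the second-derivative terms
  have hid1 : fderiv ℝ F1 x (a x) = fderiv ℝ (dder d (pairF β c)) x (a x) := by
    have hcongr : fderiv ℝ F1 x = fderiv ℝ (dder d (pairF β c)) x := by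
      refine D_congr hU hx fun y hy => ?_
      show fderiv ℝ p y (d y) = fderiv ℝ (pairF β c) y (d y)
      rw [D_congr hU hy (fun z hz => pairF_sharp_symm hg hz γ β)]
    rw [hcongr]
  have hid2 : fderiv ℝ (dder a p) x (d x) = fderiv ℝ (dder a (pairF β c)) x (d x) := by
    have hcongr : fderiv ℝ (dder a p) x = fderiv ℝ (dder a (pairF β c)) x := by
      refine D_congr hU hx fun y hy => ?_
      show fderiv ℝ p y (a y) = fderiv ℝ (pairF β c) y (a y)
      rw [D_congr hU hy (fun z hz => pairF_sharp_symm hg hz γ β)]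
    rw [hcongr]
  -- final assembly
  have hfin : 4 * pairF (covF g a (covF g b γ)) d x
      = 2 * (fderiv ℝ (pairF η d) x (a x)) - 2 * pairF η (covV g a d) x := by
    have h4 : 2 * pairF (covF g a η) d x = 4 * pairF (covF g a (covF g b γ)) d x := by
      rw [hS1]; ring
    rw [← h4, hS2]; ring
  have hdd : ∀ (X : VF n) (f : Pt n → ℝ), RG.dder X f x = fderiv ℝ f x (X x) :=
    fun X f => rfl
  simp only [hdd]
  rw [hfin, hS3]
  rw [hsign] at hS4
  linarith [hS4, hid1, hid2]
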